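/- arXiv:1611.08637 — 3 statements merged into one kernel-verified Lean document; each statement's English description precedes it below -/
import Mathlib

section
/- Let g be a real Lie algebra with an abelian complex structure J. Then the complexified center decomposes as an internal direct sum c_ℂ = c^{1,0} ⊕ c^{0,1}, where c^{1,0} = c_ℂ ∩ g^{1,0} and c^{0,1} = c_ℂ ∩ g^{0,1}. -/
open TensorProduct

/-- For an abelian complex structure `J` on a real Lie algebra `g`,
the complexified center decomposes as an internal direct sum
`c_ℂ = c^{1,0} ⊕ c^{0,1}`, where `c^{1,0} = c_ℂ ⊓ g^{1,0}` and `c^{0,1} = c_ℂ ⊓ g^{0,1}`. -/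
theorem complexified_center_decomposition
    (g : Type) [LieRing g] [LieAlgebra ℝ g]
    (J : g →ₗ[ℝ] g) (hJ : ∀ X : g, J (J X) = -X)
    (hab : ∀ X Y : g, ⁅J X, J Y⁆ = ⁅X, Y⁆)
    -- `c_ℂ` : the ℂ-span in `g_ℂ = ℂ ⊗[ℝ] g` of the image of the center of `g`
    (cC : Submodule ℂ (ℂ ⊗[ℝ] g))
    (hcC : cC = Submodule.span ℂ
      {x : ℂ ⊗[ℝ] g | ∃ Z : g, (∀ X : g, ⁅Z, X⁆ = 0) ∧ x = (1 : ℂ) ⊗ₜ[ℝ] Z})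
    -- `g^{1,0}` and `g^{0,1}` : eigenspaces of `J_ℂ` with eigenvalues `i` and `-i`
    (g10 g01 : Submodule ℂ (ℂ ⊗[ℝ] g))
    (hg10 : g10 = Module.End.eigenspace (LinearMap.baseChange ℂ J) Complex.I)
    (hg01 : g01 = Module.End.eigenspace (LinearMap.baseChange ℂ J) (-Complex.I)) :
    cC = (cC ⊓ g10) ⊔ (cC ⊓ g01) ∧ (cC ⊓ g10) ⊓ (cC ⊓ g01) = ⊥ := by
  set T := LinearMap.baseChange ℂ J with hT
  -- T ∘ T = -id
  have hT2 : ∀ x : ℂ ⊗[ℝ] g, T (T x) = -x := by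
    intro x
    induction x using TensorProduct.induction_on with
    | zero => simp
    | tmul a z => simp [hT, hJ z, TensorProduct.tmul_neg]
    | add x y hx hy => rw [map_add, map_add, hx, hy]; abel
  -- J preserves the center
  have hJc : ∀ Z : g, (∀ X : g, ⁅Z, X⁆ = 0) → ∀ X : g, ⁅J Z, X⁆ = 0 := by
    intro Z hZ X
    have h1 : J (-(J X)) = X := by rw [map_neg, hJ, neg_neg]
    calc ⁅J Z, X⁆ = ⁅J Z, J (-(J X))⁆ := by rw [h1]
      _ = ⁅Z, -(J X)⁆ := hab Z (-(J X))
      _ = 0 := by rw [lie_neg, hZ, neg_zero]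
  -- cC is T-invariant
  have hTcC : ∀ x ∈ cC, T x ∈ cC := by
    intro x hx
    rw [hcC] at hx ⊢
    induction hx using Submodule.span_induction with
    | mem x hx =>
      obtain ⟨Z, hZ, rfl⟩ := hx
      exact Submodule.subset_span ⟨J Z, hJc Z hZ, by simp [hT]⟩
    | zero => simp
    | add x y _ _ hx hy => rw [map_add]; exact Submodule.add_mem _ hx hy
    | smul a x _ hx => rw [map_smul]; exact Submodule.smul_mem _ a hx
  constructor
  · apply le_antisymm
    · intro x hx
      set p := (2⁻¹ : ℂ) • (x + (-Complex.I) • T x) with hp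
      set q := (2⁻¹ : ℂ) • (x + Complex.I • T x) with hq
      have hpq : p + q = x := by
        rw [hp, hq, ← smul_add]
        rw [show x + (-Complex.I) • T x + (x + Complex.I • T x) = (2 : ℂ) • x by
          rw [neg_smul]; rw [two_smul]; abel]
        rw [smul_smul]; norm_num
      have hpc : p ∈ cC := Submodule.smul_mem _ _
        (Submodule.add_mem _ hx (Submodule.smul_mem _ _ (hTcC x hx)))
      have hqc : q ∈ cC := Submodule.smul_mem _ _
        (Submodule.add_mem _ hx (Submodule.smul_mem _ _ (hTcC x hx)))
      have hp10 : p ∈ g10 := by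
        rw [hg10, Module.End.mem_eigenspace_iff]
        rw [hp, map_smul, map_add, map_smul, hT2]
        match_scalars <;> ring_nf <;> simp [Complex.I_sq] <;> norm_num
      have hq01 : q ∈ g01 := by
        rw [hg01, Module.End.mem_eigenspace_iff]
        rw [hq, map_smul, map_add, map_smul, hT2]
        match_scalars <;> ring_nf <;> simp [Complex.I_sq] <;> norm_num
      rw [← hpq]
      exact Submodule.add_mem_sup ⟨hpc, hp10⟩ ⟨hqc, hq01⟩
    · exact sup_le inf_le_left inf_le_left
  · rw [eq_bot_iff]
    intro x hx
    rw [Submodule.mem_inf, Submodule.mem_inf, Submodule.mem_inf] at hx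
    obtain ⟨⟨-, h10⟩, -, h01⟩ := hx
    rw [hg10, Module.End.mem_eigenspace_iff] at h10
    rw [hg01, Module.End.mem_eigenspace_iff] at h01
    have h2 : ((2 : ℂ) * Complex.I) • x = 0 := by
      have h3 : Complex.I • x - -Complex.I • x = 0 := by rw [← h10, ← h01, sub_self]
      rw [← sub_smul] at h3
      convert h3 using 2
      ring
    rcases smul_eq_zero.mp h2 with h | h
    · exact absurd h (by simp [Complex.I_ne_zero])
    · simpa using h
end

section
/- Let g be a 2-step nilpotent real Lie algebra with an abelian complex structure J. If a ℂ-linear functional φ : g_ℂ → ℂ vanishes on the subspace g^{1,0} + c^{0,1}, then dφ = 0, i.e. φ([X, Y]) = 0 for all X, Y ∈ g_ℂ. -/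
open TensorProduct

/-- Let `g` be a 2-step nilpotent real Lie algebra with an abelian
complex structure `J`.  If a ℂ-linear functional `φ : g_ℂ → ℂ` vanishes on the
subspace `g^{1,0} + c^{0,1}`, then `dφ = 0`, i.e. `φ(⁅X, Y⁆) = 0` for all `X Y : g_ℂ`. -/
theorem dphi_vanishes_of_phi_vanishes
    (g : Type) [LieRing g] [LieAlgebra ℝ g]
    (J : g →ₗ[ℝ] g) (hJ : ∀ X : g, J (J X) = -X)
    (hab : ∀ X Y : g, ⁅J X, J Y⁆ = ⁅X, Y⁆)
    -- `g` is 2-step nilpotent: `[g, g] ⊆ c`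
    (h2 : ∀ X Y Z : g, ⁅⁅X, Y⁆, Z⁆ = 0)
    (cC : Submodule ℂ (ℂ ⊗[ℝ] g))
    (hcC : cC = Submodule.span ℂ
      {x : ℂ ⊗[ℝ] g | ∃ Z : g, (∀ X : g, ⁅Z, X⁆ = 0) ∧ x = (1 : ℂ) ⊗ₜ[ℝ] Z})
    (g10 g01 : Submodule ℂ (ℂ ⊗[ℝ] g))
    (hg10 : g10 = Module.End.eigenspace (LinearMap.baseChange ℂ J) Complex.I)
    (hg01 : g01 = Module.End.eigenspace (LinearMap.baseChange ℂ J) (-Complex.I))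
    (φ : (ℂ ⊗[ℝ] g) →ₗ[ℂ] ℂ)
    (hφ : ∀ X ∈ g10 ⊔ (cC ⊓ g01), φ X = 0) :
    ∀ X Y : ℂ ⊗[ℝ] g, φ ⁅X, Y⁆ = 0 := by
  intro X Y
  set Jc := LinearMap.baseChange ℂ J with hJcdef
  -- J² = -1 on the complexification
  have hJc2 : ∀ w : ℂ ⊗[ℝ] g, Jc (Jc w) = -w := by
    intro w
    induction w using TensorProduct.induction_on with
    | zero => simp
    | tmul a x => simp [hJcdef, LinearMap.baseChange_tmul, hJ, TensorProduct.tmul_neg]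
    | add x y hx hy => simp only [map_add, hx, hy, neg_add]
  -- J preserves the center of g
  have hJcent : ∀ Z : g, (∀ X : g, ⁅Z, X⁆ = 0) → ∀ X : g, ⁅J Z, X⁆ = 0 := by
    intro Z hZ X
    have : X = J (-(J X)) := by rw [map_neg, hJ, neg_neg]
    rw [this, hab, hZ]
  -- cC is Jc-invariant
  have hJcC : ∀ w ∈ cC, Jc w ∈ cC := by
    intro w hw
    rw [hcC] at hw ⊢
    induction hw using Submodule.span_induction with
    | mem x hx =>
        obtain ⟨Z, hZ, rfl⟩ := hx
        exact Submodule.subset_span ⟨J Z, hJcent Z hZ, by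
          simp [hJcdef, LinearMap.baseChange_tmul]⟩
    | zero => simp
    | add x y _ _ hx hy => rw [map_add]; exact Submodule.add_mem _ hx hy
    | smul a x _ hx => rw [map_smul]; exact Submodule.smul_mem _ a hx
  -- the bracket lands in cC
  have hbr : ⁅X, Y⁆ ∈ cC := by
    induction X using TensorProduct.induction_on with
    | zero => simp
    | tmul a x =>
        induction Y using TensorProduct.induction_on with
        | zero =>
            have h0 : (⁅a ⊗ₜ[ℝ] x, (0 : ℂ ⊗[ℝ] g)⁆ : ℂ ⊗[ℝ] g) = 0 :=
              lie_zero (L := ℂ ⊗[ℝ] g) (M := ℂ ⊗[ℝ] g) _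
            rw [h0]; exact cC.zero_mem
        | tmul b y =>
            rw [LieAlgebra.ExtendScalars.bracket_tmul]
            have : (a * b) ⊗ₜ[ℝ] ⁅x, y⁆ = (a * b) • ((1 : ℂ) ⊗ₜ[ℝ] ⁅x, y⁆) := by
              rw [TensorProduct.smul_tmul', smul_eq_mul, mul_one]
            rw [this, hcC]
            exact Submodule.smul_mem _ _ (Submodule.subset_span
              ⟨⁅x, y⁆, fun Z => h2 x y Z, rfl⟩)
        | add y₁ y₂ h₁ h₂ =>
            have ha : (⁅a ⊗ₜ[ℝ] x, y₁ + y₂⁆ : ℂ ⊗[ℝ] g) = ⁅a ⊗ₜ[ℝ] x, y₁⁆ + ⁅a ⊗ₜ[ℝ] x, y₂⁆ :=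
              lie_add (L := ℂ ⊗[ℝ] g) (M := ℂ ⊗[ℝ] g) _ _ _
            rw [ha]; exact Submodule.add_mem _ h₁ h₂
    | add x₁ x₂ h₁ h₂ => rw [add_lie]; exact Submodule.add_mem _ h₁ h₂
  set w := ⁅X, Y⁆ with hw
  set w10 : ℂ ⊗[ℝ] g := (1/2 : ℂ) • (w - Complex.I • Jc w) with hw10
  set w01 : ℂ ⊗[ℝ] g := (1/2 : ℂ) • (w + Complex.I • Jc w) with hw01
  have hsum : w10 + w01 = w := by rw [hw10, hw01]; module
  have hIm : Complex.I * Complex.I = -1 := Complex.I_mul_I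
  have h10 : w10 ∈ g10 := by
    rw [hg10, Module.End.mem_eigenspace_iff]
    rw [hw10, map_smul, map_sub, map_smul, hJc2]
    match_scalars <;> ring_nf
    all_goals norm_num
  have h01 : w01 ∈ g01 := by
    rw [hg01, Module.End.mem_eigenspace_iff]
    rw [hw01, map_smul, map_add, map_smul, hJc2]
    match_scalars <;> ring_nf
    all_goals norm_num
  have hc01 : w01 ∈ cC := by
    rw [hw01]
    exact Submodule.smul_mem _ _ (Submodule.add_mem _ hbr
      (Submodule.smul_mem _ _ (hJcC _ hbr)))
  have e10 := hφ w10 (Submodule.mem_sup_left h10)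
  have e01 := hφ w01 (Submodule.mem_sup_right (Submodule.mem_inf.2 ⟨hc01, h01⟩))
  calc φ ⁅X, Y⁆ = φ (w10 + w01) := by rw [hsum]
    _ = 0 := by rw [map_add, e10, e01, add_zero]
end

section
/- Fix m, n ≥ 1. Let g be the real Lie algebra with basis {X_1, …, X_m, Y_1, …, Y_m, Z, A_1, …, A_n, B_1, …, B_n, C} whose only nonzero brackets among basis elements are [X_j, Y_j] = Z = −[Y_j, X_j] and [A_k, B_k] = C = −[B_k, A_k]. Then: (1) g is a 2-step nilpotent Lie algebra (the direct sum of Heisenberg algebras h_{2m+1} ⊕ h_{2n+1}); (2) the linear map J determined by JX_j = Y_j, JY_j = −X_j, JA_k = B_k, JB_k = −A_k, JZ = C, JC = −Z is an abelian complex structure; (3) setting in g_ℂ the elements W = (Z − iC)/2, S_j = (X_j − iY_j)/2, T_k = (A_k − iB_k)/2 together with their conjugates W̄ = (Z + iC)/2, S̄_j = (X_j + iY_j)/2, T̄_k = (A_k + iB_k)/2 (forming a ℂ-basis of g_ℂ), and letting ρ : g_ℂ → ℂ be the functional with ρ(W) = 1 and ρ = 0 on all other basis elements, the pairing span_ℂ{S_1,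 …, S_m, T_1, …, T_n} × span_ℂ{S̄_1, …, S̄_m, T̄_1, …, T̄_n} → ℂ given by (U, V) ↦ ρ([U, V]) is non-degenerate. -/
/-! **Statement 11.** The direct sum of two Heisenberg algebras
`h_{2m+1} ⊕ h_{2n+1}`: it is 2-step nilpotent, carries an abelian complex structure,
and the pairing induced by `dρ` on the complexification is non-degenerate. -/

namespace TwoHeisenberg

noncomputable section

/-- The underlying vector space over a field `K`, with coordinates
`(x, y, z, a, b, c)` relative to the basis
`{X_1, …, X_m, Y_1, …, Y_m, Z, A_1, …, A_n, B_1, …, B_n, C}`. -/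
abbrev G (K : Type) (m n : ℕ) :=
  (Fin m → K) × (Fin m → K) × K × (Fin n → K) × (Fin n → K) × K

variable {K : Type} [Field K] {m n : ℕ}

/-- The basis vector `X_j`. -/
def Xv (j : Fin m) : G K m n := (Pi.single j 1, 0, 0, 0, 0, 0)
/-- The basis vector `Y_j`. -/
def Yv (j : Fin m) : G K m n := (0, Pi.single j 1, 0, 0, 0, 0)
/-- The basis vector `Z`. -/
def Zv : G K m n := (0, 0, 1, 0, 0, 0)
/-- The basis vector `A_k`. -/
def Av (k : Fin n) : G K m n := (0, 0, 0, Pi.single k 1, 0, 0)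
/-- The basis vector `B_k`. -/
def Bv (k : Fin n) : G K m n := (0, 0, 0, 0, Pi.single k 1, 0)
/-- The basis vector `C`. -/
def Cv : G K m n := (0, 0, 0, 0, 0, 1)

/-- `br` is the (necessarily unique) `K`-bilinear bracket whose only nonzero values
on basis elements are `⁅X_j, Y_j⁆ = Z = -⁅Y_j, X_j⁆` and `⁅A_k, B_k⁆ = C = -⁅B_k, A_k⁆`. -/
def IsHeisenbergSumBracket (br : G K m n →ₗ[K] G K m n →ₗ[K] G K m n) : Prop :=
  (∀ j k, br (Xv j) (Yv k) = if j = k then Zv else 0) ∧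
  (∀ j k, br (Yv j) (Xv k) = if j = k then -Zv else 0) ∧
  (∀ j k, br (Xv j) (Xv k) = 0) ∧ (∀ j k, br (Yv j) (Yv k) = 0) ∧
  (∀ j k, br (Av j) (Bv k) = if j = k then Cv else 0) ∧
  (∀ j k, br (Bv j) (Av k) = if j = k then -Cv else 0) ∧
  (∀ j k, br (Av j) (Av k) = 0) ∧ (∀ j k, br (Bv j) (Bv k) = 0) ∧
  (∀ j k, br (Xv j) (Av k) = 0 ∧ br (Av k) (Xv j) = 0 ∧
          br (Xv j) (Bv k) = 0 ∧ br (Bv k) (Xv j) = 0 ∧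
          br (Yv j) (Av k) = 0 ∧ br (Av k) (Yv j) = 0 ∧
          br (Yv j) (Bv k) = 0 ∧ br (Bv k) (Yv j) = 0) ∧
  (∀ j, br (Xv j) Zv = 0 ∧ br Zv (Xv j) = 0 ∧ br (Yv j) Zv = 0 ∧ br Zv (Yv j) = 0 ∧
        br (Xv j) Cv = 0 ∧ br Cv (Xv j) = 0 ∧ br (Yv j) Cv = 0 ∧ br Cv (Yv j) = 0) ∧
  (∀ k, br (Av k) Zv = 0 ∧ br Zv (Av k) = 0 ∧ br (Bv k) Zv = 0 ∧ br Zv (Bv k) = 0 ∧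
        br (Av k) Cv = 0 ∧ br Cv (Av k) = 0 ∧ br (Bv k) Cv = 0 ∧ br Cv (Bv k) = 0) ∧
  (br (Zv : G K m n) Zv = 0 ∧ br (Zv : G K m n) Cv = 0 ∧
   br (Cv : G K m n) Zv = 0 ∧ br (Cv : G K m n) Cv = 0)

/-- `W = (Z - iC)/2` in the complexification. -/
def W : G ℂ m n := (0, 0, 1 / 2, 0, 0, -(Complex.I / 2))
/-- `W̄ = (Z + iC)/2`. -/
def Wb : G ℂ m n := (0, 0, 1 / 2, 0, 0, Complex.I / 2)
/-- `S_j = (X_j - iY_j)/2`. -/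
def S (j : Fin m) : G ℂ m n :=
  (Pi.single j (1 / 2), Pi.single j (-(Complex.I / 2)), 0, 0, 0, 0)
/-- `S̄_j = (X_j + iY_j)/2`. -/
def Sb (j : Fin m) : G ℂ m n :=
  (Pi.single j (1 / 2), Pi.single j (Complex.I / 2), 0, 0, 0, 0)
/-- `T_k = (A_k - iB_k)/2`. -/
def T (k : Fin n) : G ℂ m n :=
  (0, 0, 0, Pi.single k (1 / 2), Pi.single k (-(Complex.I / 2)), 0)
/-- `T̄_k = (A_k + iB_k)/2`. -/
def Tb (k : Fin n) : G ℂ m n :=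
  (0, 0, 0, Pi.single k (1 / 2), Pi.single k (Complex.I / 2), 0)

section AUX
lemma decomp (u : G K m n) :
    u = (∑ j, u.1 j • Xv j) + (∑ j, u.2.1 j • Yv j) + u.2.2.1 • Zv
      + (∑ k, u.2.2.2.1 k • Av k) + (∑ k, u.2.2.2.2.1 k • Bv k)
      + u.2.2.2.2.2 • Cv := by
  obtain ⟨x, y, z, a, b, c⟩ := u
  simp only [Xv, Yv, Zv, Av, Bv, Cv, Prod.smul_mk, smul_zero, Prod.mk_add_mk,
    Prod.ext_iff]
  refine ⟨?_, ?_, ?_, ?_, ?_, ?_⟩ <;>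
    simp [Prod.fst_sum, Prod.snd_sum, Finset.sum_apply, Pi.single_apply,
      Finset.sum_ite_eq', funext_iff]

lemma hull {M : Type*} [AddCommGroup M] [Module K M] (f g : G K m n →ₗ[K] M)
    (hX : ∀ j, f (Xv j) = g (Xv j)) (hY : ∀ j, f (Yv j) = g (Yv j))
    (hZ : f Zv = g Zv)
    (hA : ∀ k, f (Av k) = g (Av k)) (hB : ∀ k, f (Bv k) = g (Bv k))
    (hC : f Cv = g Cv) : f = g := by
  apply LinearMap.ext; intro u
  rw [decomp u]
  simp [hX, hY, hZ, hA, hB, hC]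

/-- The explicit bilinear model of the bracket. -/
def br0 : G K m n →ₗ[K] G K m n →ₗ[K] G K m n :=
  LinearMap.mk₂ K
    (fun u v => (0, 0, ∑ j, (u.1 j * v.2.1 j - u.2.1 j * v.1 j), 0, 0,
      ∑ k, (u.2.2.2.1 k * v.2.2.2.2.1 k - u.2.2.2.2.1 k * v.2.2.2.1 k)))
    (by intro u u' v
        simp only [Prod.ext_iff, Prod.fst_add, Prod.snd_add, Pi.add_apply]
        refine ⟨by simp, by simp, ?_, by simp, by simp, ?_⟩ <;>
          · rw [← Finset.sum_add_distrib]
            exact Finset.sum_congr rfl fun i _ => by ring)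
    (by intro c u v
        simp only [Prod.ext_iff, Prod.smul_fst, Prod.smul_snd, Pi.smul_apply, smul_eq_mul]
        refine ⟨by simp, by simp, ?_, by simp, by simp, ?_⟩ <;>
          · rw [Finset.mul_sum]
            exact Finset.sum_congr rfl fun i _ => by ring)
    (by intro u v v'
        simp only [Prod.ext_iff, Prod.fst_add, Prod.snd_add, Pi.add_apply]
        refine ⟨by simp, by simp, ?_, by simp, by simp, ?_⟩ <;>
          · rw [← Finset.sum_add_distrib]
            exact Finset.sum_congr rfl fun i _ => by ring)
    (by intro c u v
        simp only [Prod.ext_iff, Prod.smul_fst, Prod.smul_snd, Pi.smul_apply, smul_eq_mul]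
        refine ⟨by simp, by simp, ?_, by simp, by simp, ?_⟩ <;>
          · rw [Finset.mul_sum]
            exact Finset.sum_congr rfl fun i _ => by ring)

lemma br0_apply (u v : G K m n) :
    br0 u v = ((0 : Fin m → K), (0 : Fin m → K),
      ∑ j, (u.1 j * v.2.1 j - u.2.1 j * v.1 j), (0 : Fin n → K), (0 : Fin n → K),
      ∑ k, (u.2.2.2.1 k * v.2.2.2.2.1 k - u.2.2.2.2.1 k * v.2.2.2.1 k)) := rfl

lemma single_dot {p : ℕ} (j k : Fin p) :
    (∑ x, (Pi.single j 1 : Fin p → K) x * (Pi.single k 1 : Fin p → K) x)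
      = if j = k then 1 else 0 := by
  rw [Finset.sum_eq_single j]
  · simp [Pi.single_apply, eq_comm]
  · intro b _ hb; simp [Pi.single_apply, hb]
  · simp

set_option maxHeartbeats 1000000 in
lemma br_eq {br : G K m n →ₗ[K] G K m n →ₗ[K] G K m n}
    (hbr : IsHeisenbergSumBracket br) : br = br0 := by
  obtain ⟨h1, h2, h3, h4, h5, h6, h7, h8, h9, h10, h11, h12⟩ := hbr
  apply hull <;> try intro j
  all_goals apply hull <;> try intro k
  all_goals simp only [h1, h2, h3, h4, h5, h6, h7, h8, h9, h10, h11, h12]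
  all_goals
    simp only [br0_apply, Xv, Yv, Zv, Av, Bv, Cv, single_dot, Prod.ext_iff,
      Pi.zero_apply, zero_mul, mul_zero, sub_zero, zero_sub, Finset.sum_const_zero,
      Finset.sum_sub_distrib, neg_zero, Prod.fst_zero, Prod.snd_zero, Prod.fst_neg,
      Prod.snd_neg, Prod.neg_mk]
  all_goals try split_ifs with hjk
  all_goals (try (subst hjk; simp))
  all_goals (try simp [single_dot, Prod.ext_iff])
  all_goals exact hjk

lemma br0_self (u : G K m n) : br0 u u = 0 := by
  simp [br0_apply, Prod.ext_iff, mul_comm]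

lemma br0_left (u v w : G K m n) : br0 (br0 u v) w = 0 := by
  simp [br0_apply, Prod.ext_iff]

lemma br0_right (w u v : G K m n) : br0 w (br0 u v) = 0 := by
  simp [br0_apply, Prod.ext_iff]

/-- The explicit model of the complex structure. -/
def J0 : G K m n →ₗ[K] G K m n where
  toFun u := (-u.2.1, u.1, -u.2.2.2.2.2, -u.2.2.2.2.1, u.2.2.2.1, u.2.2.1)
  map_add' u v := by simp [Prod.ext_iff]; ring_nf; simp
  map_smul' c u := by simp [Prod.ext_iff, smul_smul]

lemma J0_apply (u : G K m n) :
    J0 u = (-u.2.1, u.1, -u.2.2.2.2.2, -u.2.2.2.2.1, u.2.2.2.1, u.2.2.1) := rfl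

lemma J_eq {J : G K m n →ₗ[K] G K m n}
    (hJX : ∀ j, J (Xv j) = Yv j) (hJY : ∀ j, J (Yv j) = -Xv j)
    (hJA : ∀ k, J (Av k) = Bv k) (hJB : ∀ k, J (Bv k) = -Av k)
    (hJZ : J (Zv : G K m n) = Cv) (hJC : J (Cv : G K m n) = -Zv) : J = J0 := by
  apply hull
  · intro j; rw [hJX j]; simp [J0_apply, Xv, Yv, Prod.ext_iff]
  · intro j; rw [hJY j]; simp [J0_apply, Xv, Yv, Prod.ext_iff]
  · rw [hJZ]; simp [J0_apply, Zv, Cv, Prod.ext_iff]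
  · intro k; rw [hJA k]; simp [J0_apply, Av, Bv, Prod.ext_iff]
  · intro k; rw [hJB k]; simp [J0_apply, Av, Bv, Prod.ext_iff]
  · rw [hJC]; simp [J0_apply, Zv, Cv, Prod.ext_iff]

lemma J0_sq (u : G K m n) : J0 (J0 u) = -u := by
  simp [J0_apply, Prod.ext_iff]

lemma br0_J0 (u v : G K m n) : br0 (J0 u) (J0 v) = br0 u v := by
  simp only [br0_apply, J0_apply, Prod.mk.injEq]
  refine ⟨trivial, trivial, ?_, trivial, trivial, ?_⟩ <;>
    exact Finset.sum_congr rfl fun i _ => by simp; ring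

end AUX

section AUX2

lemma single_dot' {p : ℕ} (f : Fin p → ℂ) (k : Fin p) (a : ℂ) :
    (∑ j, f j * (Pi.single k a : Fin p → ℂ) j) = f k * a := by
  rw [Finset.sum_eq_single k]
  · simp
  · intro b _ hb; simp [Pi.single_apply, hb]
  · simp

lemma single_dot'' {p : ℕ} (f : Fin p → ℂ) (k : Fin p) (a : ℂ) :
    (∑ j, (Pi.single k a : Fin p → ℂ) j * f j) = a * f k := by
  rw [Finset.sum_eq_single k]
  · simp
  · intro b _ hb; simp [Pi.single_apply, hb]
  · simp

lemma rho_apply (ρ : G ℂ m n →ₗ[ℂ] ℂ) (hρW : ρ W = 1) (hρWb : ρ Wb = 0) (z c : ℂ) :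
    ρ ((0, 0, z, 0, 0, c) : G ℂ m n) = z + Complex.I * c := by
  have h : ((0, 0, z, 0, 0, c) : G ℂ m n)
      = (z + Complex.I * c) • W + (z - Complex.I * c) • Wb := by
    simp only [W, Wb, Prod.smul_mk, smul_zero, Prod.mk_add_mk, Prod.ext_iff,
      smul_eq_mul]
    refine ⟨by simp, by simp, by ring, by simp, by simp, ?_⟩
    have : Complex.I * Complex.I = -1 := Complex.I_mul_I
    field_simp
    ring_nf
    rw [Complex.I_sq]
    ring
  rw [h, map_add, map_smul, map_smul, hρW, hρWb]
  simp

lemma mem_spanS {u : G ℂ m n}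
    (hu : u ∈ Submodule.span ℂ (Set.range (S (m := m) (n := n)) ∪ Set.range T)) :
    u.2.1 = -(Complex.I) • u.1 ∧ u.2.2.2.2.1 = -(Complex.I) • u.2.2.2.1 ∧
      u.2.2.1 = 0 ∧ u.2.2.2.2.2 = 0 := by
  induction hu using Submodule.span_induction with
  | mem x hx =>
      rcases hx with ⟨j, rfl⟩ | ⟨j, rfl⟩
      · refine ⟨?_, by simp [S], rfl, rfl⟩
        funext i
        by_cases h : i = j <;> simp [S, Pi.single_apply, h] <;> ring
      · refine ⟨by simp [T], ?_, rfl, rfl⟩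
        funext i
        by_cases h : i = j <;> simp [T, Pi.single_apply, h] <;> ring
  | zero => simp
  | add x y hx hy ihx ihy =>
      obtain ⟨a1, a2, a3, a4⟩ := ihx; obtain ⟨b1, b2, b3, b4⟩ := ihy
      refine ⟨?_, ?_, ?_, ?_⟩ <;>
        simp only [Prod.fst_add, Prod.snd_add, a1, a2, a3, a4, b1, b2, b3, b4,
          smul_add, add_zero]
  | smul a x hx ihx =>
      obtain ⟨a1, a2, a3, a4⟩ := ihx
      refine ⟨?_, ?_, ?_, ?_⟩ <;>
        simp only [Prod.smul_fst, Prod.smul_snd, a1, a2, a3, a4, smul_zero] <;>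
        rw [smul_comm]

lemma mem_spanSb {u : G ℂ m n}
    (hu : u ∈ Submodule.span ℂ (Set.range (Sb (m := m) (n := n)) ∪ Set.range Tb)) :
    u.2.1 = (Complex.I) • u.1 ∧ u.2.2.2.2.1 = (Complex.I) • u.2.2.2.1 ∧
      u.2.2.1 = 0 ∧ u.2.2.2.2.2 = 0 := by
  induction hu using Submodule.span_induction with
  | mem x hx =>
      rcases hx with ⟨j, rfl⟩ | ⟨j, rfl⟩
      · refine ⟨?_, by simp [Sb], rfl, rfl⟩
        funext i
        by_cases h : i = j <;> simp [Sb, Pi.single_apply, h] <;> ring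
      · refine ⟨by simp [Tb], ?_, rfl, rfl⟩
        funext i
        by_cases h : i = j <;> simp [Tb, Pi.single_apply, h] <;> ring
  | zero => simp
  | add x y hx hy ihx ihy =>
      obtain ⟨a1, a2, a3, a4⟩ := ihx; obtain ⟨b1, b2, b3, b4⟩ := ihy
      refine ⟨?_, ?_, ?_, ?_⟩ <;>
        simp only [Prod.fst_add, Prod.snd_add, a1, a2, a3, a4, b1, b2, b3, b4,
          smul_add, add_zero]
  | smul a x hx ihx =>
      obtain ⟨a1, a2, a3, a4⟩ := ihx
      refine ⟨?_, ?_, ?_, ?_⟩ <;>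
        simp only [Prod.smul_fst, Prod.smul_snd, a1, a2, a3, a4, smul_zero] <;>
        rw [smul_comm]

end AUX2

/-- Main statement for the direct sum of two Heisenberg algebras. -/
theorem twoHeisenberg_main
    (m n : ℕ) (hm : 1 ≤ m) (hn : 1 ≤ n)
    -- the real Lie bracket
    (br : G ℝ m n →ₗ[ℝ] G ℝ m n →ₗ[ℝ] G ℝ m n) (hbr : IsHeisenbergSumBracket br)
    -- the complex structure `J`
    (J : G ℝ m n →ₗ[ℝ] G ℝ m n)
    (hJX : ∀ j, J (Xv j) = Yv j) (hJY : ∀ j, J (Yv j) = -Xv j)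
    (hJA : ∀ k, J (Av k) = Bv k) (hJB : ∀ k, J (Bv k) = -Av k)
    (hJZ : J (Zv : G ℝ m n) = Cv) (hJC : J (Cv : G ℝ m n) = -Zv)
    -- the ℂ-bilinear extension of the bracket to `g_ℂ`
    (brc : G ℂ m n →ₗ[ℂ] G ℂ m n →ₗ[ℂ] G ℂ m n) (hbrc : IsHeisenbergSumBracket brc)
    -- the functional `ρ` with `ρ W = 1`, vanishing on the other basis elements
    (ρ : G ℂ m n →ₗ[ℂ] ℂ)
    (hρW : ρ W = 1) (hρWb : ρ Wb = 0)
    (hρS : ∀ j, ρ (S j) = 0 ∧ ρ (Sb j) = 0) (hρT : ∀ k, ρ (T k) = 0 ∧ ρ (Tb k) = 0) :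
    -- (1) `g` is a 2-step nilpotent Lie algebra
    ((∀ u : G ℝ m n, br u u = 0) ∧
     (∀ u v w : G ℝ m n, br (br u v) w + br (br v w) u + br (br w u) v = 0) ∧
     (∀ u v w : G ℝ m n, br (br u v) w = 0 ∧ br w (br u v) = 0)) ∧
    -- (2) `J` is an abelian complex structure
    ((∀ u : G ℝ m n, J (J u) = -u) ∧
     (∀ u v : G ℝ m n, br (J u) (J v) = br u v)) ∧
    -- (3) the pairing `(U, V) ↦ ρ ⁅U, V⁆` between `span {S_j, T_k}` and
    --     `span {S̄_j, T̄_k}` is non-degenerate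
    ((∀ u ∈ Submodule.span ℂ (Set.range (S (m := m) (n := n)) ∪ Set.range T),
        (∀ v ∈ Submodule.span ℂ (Set.range (Sb (m := m) (n := n)) ∪ Set.range Tb),
          ρ (brc u v) = 0) → u = 0) ∧
     (∀ v ∈ Submodule.span ℂ (Set.range (Sb (m := m) (n := n)) ∪ Set.range Tb),
        (∀ u ∈ Submodule.span ℂ (Set.range (S (m := m) (n := n)) ∪ Set.range T),
          ρ (brc u v) = 0) → v = 0)) := by
  have hbe := br_eq hbr
  have hbce := br_eq hbrc
  have hJe := J_eq hJX hJY hJA hJB hJZ hJC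
  refine ⟨⟨?_, ?_, ?_⟩, ⟨?_, ?_⟩, ?_, ?_⟩
  · intro u; rw [hbe]; exact br0_self u
  · intro u v w; rw [hbe]; simp [br0_left]
  · intro u v w; rw [hbe]; exact ⟨br0_left u v w, br0_right w u v⟩
  · intro u; rw [hJe]; exact J0_sq u
  · intro u v; rw [hbe, hJe]; exact br0_J0 u v
  · intro u hu h
    obtain ⟨x, y, z, a, b, c⟩ := u
    obtain ⟨e1, e2, e3, e4⟩ := mem_spanS hu
    have e1' : y = -Complex.I • x := e1
    have e2' : b = -Complex.I • a := e2
    have e3' : z = 0 := e3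
    have e4' : c = 0 := e4
    have hS : ∀ k : Fin m, x k = 0 := by
      intro k
      have h1 := h (Sb k) (Submodule.subset_span (Or.inl ⟨k, rfl⟩))
      rw [hbce, br0_apply, rho_apply ρ hρW hρWb] at h1
      simp only [Sb, e1', e2', Pi.smul_apply, smul_eq_mul, Finset.sum_sub_distrib,
        single_dot', Pi.zero_apply, mul_zero, zero_mul, sub_zero,
        Finset.sum_const_zero] at h1
      linear_combination -Complex.I * h1 + x k * Complex.I_mul_I
    have hT : ∀ k : Fin n, a k = 0 := by
      intro k
      have h1 := h (Tb k) (Submodule.subset_span (Or.inr ⟨k, rfl⟩))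
      rw [hbce, br0_apply, rho_apply ρ hρW hρWb] at h1
      simp only [Tb, e1', e2', Pi.smul_apply, smul_eq_mul, Finset.sum_sub_distrib,
        single_dot', Pi.zero_apply, mul_zero, zero_mul, sub_zero,
        Finset.sum_const_zero] at h1
      linear_combination -h1 + a k * Complex.I_mul_I
    have hx : x = 0 := funext hS
    have ha : a = 0 := funext hT
    simp [Prod.ext_iff, hx, ha, e1', e2', e3', e4']
  · intro v hv h
    obtain ⟨x, y, z, a, b, c⟩ := v
    obtain ⟨e1, e2, e3, e4⟩ := mem_spanSb hv
    have e1' : y = Complex.I • x := e1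
    have e2' : b = Complex.I • a := e2
    have e3' : z = 0 := e3
    have e4' : c = 0 := e4
    have hS : ∀ k : Fin m, x k = 0 := by
      intro k
      have h1 := h (S k) (Submodule.subset_span (Or.inl ⟨k, rfl⟩))
      rw [hbce, br0_apply, rho_apply ρ hρW hρWb] at h1
      simp only [S, e1', e2', Pi.smul_apply, smul_eq_mul, Finset.sum_sub_distrib,
        single_dot'', Pi.zero_apply, mul_zero, zero_mul, sub_zero,
        Finset.sum_const_zero] at h1
      linear_combination -Complex.I * h1 + x k * Complex.I_mul_I
    have hT : ∀ k : Fin n, a k = 0 := by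
      intro k
      have h1 := h (T k) (Submodule.subset_span (Or.inr ⟨k, rfl⟩))
      rw [hbce, br0_apply, rho_apply ρ hρW hρWb] at h1
      simp only [T, e1', e2', Pi.smul_apply, smul_eq_mul, Finset.sum_sub_distrib,
        single_dot'', Pi.zero_apply, mul_zero, zero_mul, sub_zero,
        Finset.sum_const_zero] at h1
      linear_combination -h1 + a k * Complex.I_mul_I
    have hx : x = 0 := funext hS
    have ha : a = 0 := funext hT
    simp [Prod.ext_iff, hx, ha, e1', e2', e3', e4']

end

end TwoHeisenberg
end
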